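/- Let d, p ≥ 1, let c ≥ 1 be a chunk size, let Q_1, …, Q_t, K_1, …, K_t ∈ ℝ^d and V_1, …, V_t ∈ ℝ^v, and fix i = nc + m with n ≥ 0 and 1 ≤ m ≤ c. Define the chunk state S = Σ_{j=1}^{nc} spow_p(K_j) V_j^T ∈ ℝ^{C(d+p−1,p)×v}, the state normalizer γ = Σ_{j=1}^{nc} spow_p(K_j), the intra-chunk output Y_i = Σ_{j=nc+1}^{i} (⟨Q_i, K_j⟩)^p V_j, and the intra-chunk normalizer ζ_i = Σ_{j=nc+1}^{i} (⟨Q_i, K_j⟩)^p. If Σ_{j=1}^{i} (⟨Q_i, K_j⟩)^p ≠ 0, then (Y_i + S^T spow_p(Q_i)) / (ζ_i + ⟨spow_p(Q_i), γ⟩) = (Σ_{j=1}^{i} (⟨Q_i, K_j⟩)^p V_j) / (Σ_{j=1}^{i} (⟨Q_i, K_j⟩)^p); that is, the fused-query-state computation produces exactly the sum-normalized power attention output. -/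

import Mathlib

open scoped Classical

/-- hist_k(i): the number of positions j with i_j = k. -/
def hist {p d : ℕ} (i : Fin p → Fin d) (k : Fin d) : ℕ :=
  (Finset.univ.filter (fun j => i j = k)).card

/-- The symmetric power embedding spow_p : ℝ^d → ℝ^{|NDMI^p_d|}, indexed by
non-decreasing multi-indices (monotone functions Fin p → Fin d), with entry
√(p! / ∏_k hist_k(i)!) · ∏_j x_{i_j}. -/
noncomputable def spow {d : ℕ} (p : ℕ) (x : Fin d → ℝ)
    (i : {f : Fin p → Fin d // Monotone f}) : ℝ :=
  Real.sqrt ((p.factorial : ℝ) / ∏ k, ((hist i.1 k).factorial : ℝ)) * ∏ j, x (i.1 j)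

/-!
The key identity is `⟨spow_p x, spow_p y⟩ = ⟨x, y⟩ ^ p`. By the multinomial theorem `⟨x, y⟩ ^ p`
is a sum over exponent vectors `k` with `∑ k = p` of `multinomial k · ∏ (x_b y_b) ^ k_b`, and a
non-decreasing multi-index is determined by its histogram, which ranges over exactly these
exponent vectors; the square-root weights in `spow` multiply to exactly the multinomial
coefficient. By linearity the chunk state and normalizer therefore contribute the attention terms
of positions `1, …, nc`, and together with the intra-chunk terms of positions `nc + 1, …, nc + m`
these are the full sums.
-/

open Finset

section Histogram

variable {p d : ℕ}

lemma hist_eq_count (f : Fin p → Fin d) (a : Fin d) :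
    hist f a = Multiset.count a (List.ofFn f : Multiset (Fin d)) := by
  rw [← Fin.univ_val_map, Multiset.count_map, hist, Finset.card, Finset.filter_val]
  exact congrArg _ (Multiset.filter_congr fun _ _ => eq_comm)

lemma sum_hist (f : Fin p → Fin d) : ∑ k, hist f k = p := by
  simpa [hist] using
    (card_eq_sum_card_fiberwise (s := univ) (t := univ) fun x _ => mem_univ (f x)).symm

lemma prod_comp_eq_prod_pow_hist {M : Type*} [CommMonoid M] (f : Fin p → Fin d) (a : Fin d → M) :
    ∏ j, a (f j) = ∏ k, a k ^ hist f k := by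
  rw [← prod_fiberwise_of_maps_to' (g := f) (fun x _ => mem_univ (f x)) a]
  exact prod_congr rfl fun k _ => by rw [hist, prod_const]

lemma Monotone.eq_of_hist_eq {f g : Fin p → Fin d} (hf : Monotone f) (hg : Monotone g)
    (h : hist f = hist g) : f = g := by
  have hperm : (List.ofFn f : Multiset (Fin d)) = (List.ofFn g : Multiset (Fin d)) := by
    ext a
    rw [← hist_eq_count, ← hist_eq_count, h]
  exact List.ofFn_injective <| List.Perm.eq_of_pairwise'
    (List.sortedLE_ofFn_iff.mpr hf).pairwise (List.sortedLE_ofFn_iff.mpr hg).pairwise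
    (Multiset.coe_eq_coe.mp hperm)

/-- Sorting the multiset with multiplicities `k` gives the required multi-index. -/
lemma exists_monotone_hist_eq (k : Fin d → ℕ) (hk : ∑ i, k i = p) :
    ∃ f : Fin p → Fin d, Monotone f ∧ hist f = k := by
  set s : Multiset (Fin d) := ∑ i, k i • {i}
  have hcount : ∀ a, s.count a = k a := fun a => by
    simp [s, Multiset.count_sum', Multiset.count_nsmul, Multiset.count_singleton]
  have hcard : Multiset.card s = p := by simp [s, ← hk]
  set l := s.sort (· ≤ ·)
  have hl : l.length = p := by rw [Multiset.length_sort, hcard]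
  refine ⟨fun j => l.get (Fin.cast hl.symm j),
    (Multiset.pairwise_sort _ _).sortedLE.monotone_get.comp fun _ _ h => h, funext fun a => ?_⟩
  have hofFn : List.ofFn (fun j : Fin p => l.get (Fin.cast hl.symm j)) = l := by
    rw [← List.ofFn_congr hl l.get, List.ofFn_get]
  rw [hist_eq_count, hofFn, Multiset.sort_eq, hcount]

lemma multinomial_hist (f : Fin p → Fin d) :
    (Nat.multinomial univ (hist f) : ℝ) = p.factorial / ∏ k, ((hist f k).factorial : ℝ) := by
  have hspec := Nat.multinomial_spec univ (hist f)
  rw [sum_hist] at hspec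
  rw [eq_div_iff (by positivity), mul_comm]
  exact_mod_cast hspec

end Histogram

lemma spow_mul_spow (p : ℕ) {d : ℕ} (x y : Fin d → ℝ) (f : {f : Fin p → Fin d // Monotone f}) :
    spow p x f * spow p y f = Nat.multinomial univ (hist f.1) * ∏ k, (x k * y k) ^ hist f.1 k := by
  have hnonneg : (0 : ℝ) ≤ p.factorial / ∏ k, ((hist f.1 k).factorial : ℝ) := by positivity
  rw [spow, spow, mul_mul_mul_comm, Real.mul_self_sqrt hnonneg, ← multinomial_hist,
    ← prod_mul_distrib, prod_comp_eq_prod_pow_hist f.1 fun b => x b * y b]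

theorem sum_spow_mul_spow (p : ℕ) {d : ℕ} (x y : Fin d → ℝ) :
    ∑ f : {f : Fin p → Fin d // Monotone f}, spow p x f * spow p y f = (∑ b, x b * y b) ^ p := by
  rw [sum_pow_eq_sum_piAntidiag]
  refine sum_bij (fun f _ => hist f.1) (fun f _ => mem_piAntidiag.mpr ⟨sum_hist f.1, by simp⟩)
    (fun f _ g _ h => Subtype.ext (f.2.eq_of_hist_eq g.2 h)) (fun k hk => ?_)
    (fun f _ => spow_mul_spow p x y f)
  obtain ⟨f, hf, rfl⟩ := exists_monotone_hist_eq k (mem_piAntidiag.mp hk).1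
  exact ⟨⟨f, hf⟩, mem_univ _, rfl⟩

theorem sum_spow_mul_sum_spow_mul (p : ℕ) {d : ℕ} {ι : Type*} (s : Finset ι) (q : Fin d → ℝ)
    (K : ι → Fin d → ℝ) (w : ι → ℝ) :
    ∑ f : {f : Fin p → Fin d // Monotone f}, spow p q f * ∑ j ∈ s, spow p (K j) f * w j
      = ∑ j ∈ s, (∑ b, q b * K j b) ^ p * w j := by
  simp_rw [mul_sum, ← mul_assoc]
  rw [sum_comm]
  simp_rw [← sum_mul, sum_spow_mul_spow]

lemma sum_Icc_add_one_add_sum_Icc {M : Type*} [AddCommMonoid M] (a b : ℕ) (g : ℕ → M) :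
    ∑ j ∈ Icc (a + 1) (a + b), g j + ∑ j ∈ Icc 1 a, g j = ∑ j ∈ Icc 1 (a + b), g j := by
  rw [Icc_add_one_left_eq_Ioc, ← zero_add 1, Icc_add_one_left_eq_Ioc, Icc_add_one_left_eq_Ioc,
    add_comm]
  exact sum_Ioc_consecutive _ (Nat.zero_le a) (Nat.le_add_right a b)

theorem fused_query_state_correct_general
    (d p v c n m : ℕ)
    (Q K : ℕ → Fin d → ℝ) (V : ℕ → Fin v → ℝ) :
    ∀ a : Fin v,
      ((∑ j ∈ Finset.Icc (n * c + 1) (n * c + m),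
            (∑ b, Q (n * c + m) b * K j b) ^ p * V j a)
          + ∑ idx : {f : Fin p → Fin d // Monotone f},
              spow p (Q (n * c + m)) idx
                * (∑ j ∈ Finset.Icc 1 (n * c), spow p (K j) idx * V j a))
        / ((∑ j ∈ Finset.Icc (n * c + 1) (n * c + m),
              (∑ b, Q (n * c + m) b * K j b) ^ p)
            + ∑ idx : {f : Fin p → Fin d // Monotone f},
                spow p (Q (n * c + m)) idx
                  * (∑ j ∈ Finset.Icc 1 (n * c), spow p (K j) idx))
      = (∑ j ∈ Finset.Icc 1 (n * c + m),
            (∑ b, Q (n * c + m) b * K j b) ^ p * V j a)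
          / (∑ j ∈ Finset.Icc 1 (n * c + m),
              (∑ b, Q (n * c + m) b * K j b) ^ p) := by
  intro a
  have hnormalizer := sum_spow_mul_sum_spow_mul p (Icc 1 (n * c)) (Q (n * c + m)) K 1
  simp only [Pi.one_apply, mul_one] at hnormalizer
  rw [sum_spow_mul_sum_spow_mul, hnormalizer, sum_Icc_add_one_add_sum_Icc,
    sum_Icc_add_one_add_sum_Icc]

/-- With chunk state S = Σ_{j=1}^{nc} spow_p(K_j) V_j^T, state
normalizer γ = Σ_{j=1}^{nc} spow_p(K_j), intra-chunk output
Y_i = Σ_{j=nc+1}^{i} (⟨Q_i,K_j⟩)^p V_j and intra-chunk normalizer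
ζ_i = Σ_{j=nc+1}^{i} (⟨Q_i,K_j⟩)^p, where i = nc + m with 1 ≤ m ≤ c and
nc + m ≤ t, if Σ_{j=1}^{i} (⟨Q_i,K_j⟩)^p ≠ 0, then
(Y_i + S^T spow_p(Q_i)) / (ζ_i + ⟨spow_p(Q_i), γ⟩)
  = (Σ_{j=1}^{i} (⟨Q_i,K_j⟩)^p V_j) / (Σ_{j=1}^{i} (⟨Q_i,K_j⟩)^p). -/
theorem fused_query_state_correct
    (d p v c t n m : ℕ) (hd : 1 ≤ d) (hp : 1 ≤ p) (hc : 1 ≤ c)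
    (hm1 : 1 ≤ m) (hmc : m ≤ c) (hit : n * c + m ≤ t)
    (Q K : ℕ → Fin d → ℝ) (V : ℕ → Fin v → ℝ)
    (hne : (∑ j ∈ Finset.Icc 1 (n * c + m),
        (∑ b, Q (n * c + m) b * K j b) ^ p) ≠ 0) :
    ∀ a : Fin v,
      ((∑ j ∈ Finset.Icc (n * c + 1) (n * c + m),
            (∑ b, Q (n * c + m) b * K j b) ^ p * V j a)
          + ∑ idx : {f : Fin p → Fin d // Monotone f},
              spow p (Q (n * c + m)) idx
                * (∑ j ∈ Finset.Icc 1 (n * c), spow p (K j) idx * V j a))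
        / ((∑ j ∈ Finset.Icc (n * c + 1) (n * c + m),
              (∑ b, Q (n * c + m) b * K j b) ^ p)
            + ∑ idx : {f : Fin p → Fin d // Monotone f},
                spow p (Q (n * c + m)) idx
                  * (∑ j ∈ Finset.Icc 1 (n * c), spow p (K j) idx))
      = (∑ j ∈ Finset.Icc 1 (n * c + m),
            (∑ b, Q (n * c + m) b * K j b) ^ p * V j a)
          / (∑ j ∈ Finset.Icc 1 (n * c + m),
              (∑ b, Q (n * c + m) b * K j b) ^ p) :=
  fused_query_state_correct_general d p v c n m Q K V
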